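/- Let q, A, B, C, D, E be nonzero complex numbers with 0 < |q| < 1 and |Cq³| > 1, generic in the sense that every q-shifted factorial and linear factor appearing in a denominator of K_N is nonzero for all N. Then K_N(A;B,C,D,E)/(Cq³)^N → 0 as N → ∞. -/

import Mathlib

/-- The bilateral `q`-shifted factorial `(a;q)_n` for `n ∈ ℤ`:
`(a;q)_0 = 1`, `(a;q)_n = ∏_{j=0}^{n-1} (1 - a q^j)` for `n ≥ 1`, and
`(a;q)_{-n} = 1 / ∏_{j=1}^{n} (1 - a q^{-j})` for `n ≥ 1`. -/
noncomputable def qPoch (q a : ℂ) (n : ℤ) : ℂ :=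
  if 0 ≤ n then ∏ j ∈ Finset.range n.toNat, (1 - a * q ^ j)
  else (∏ j ∈ Finset.range (-n).toNat, (1 - a * q ^ (-(j : ℤ) - 1)))⁻¹

/-- The truncated very-well-poised `₆ψ₆` series `S_N(A,B,C,D,E)`:
`Σ_{n=-N}^{N} [(1 - BDEq^{2n+1}/A)/(1 - BDEq/A)] ·
(Bq,Dq,Eq,BCDEq²/A²;q)_n / (DEq/A,BEq/A,BDq/A,A/C;q)_n · (1/(Cq²))^n`. -/
noncomputable def truncS (q A B C D E : ℂ) (N : ℕ) : ℂ :=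
  ∑ n ∈ Finset.Icc (-(N : ℤ)) (N : ℤ),
    (1 - B*D*E*q^(2*n+1)/A) / (1 - B*D*E*q/A) *
    ((qPoch q (B*q) n * qPoch q (D*q) n * qPoch q (E*q) n * qPoch q (B*C*D*E*q^2/A^2) n) /
     (qPoch q (D*E*q/A) n * qPoch q (B*E*q/A) n * qPoch q (B*D*q/A) n * qPoch q (A/C) n)) *
    (1/(C*q^2))^n

/-- The boundary quantity `K_N(A;B,C,D,E)` appearing in the recurrence
for the truncated `₆ψ₆` series. -/
noncomputable def Kterm (q A B C D E : ℂ) (N : ℕ) : ℂ :=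
  q^((N : ℤ) - 2)/C * ((1 - B*D*E*q^(2*(N : ℤ)+3)/A) / (1 - B*D*E*q/A)) *
    ((qPoch q (B*q) ((N : ℤ)+1) * qPoch q (D*q) ((N : ℤ)+1) * qPoch q (E*q) ((N : ℤ)+1) *
        qPoch q (B*C*D*E*q^2/A^2) ((N : ℤ)+1)) /
     (qPoch q (A/C) ((N : ℤ)+1) * qPoch q (B*D*q/A) ((N : ℤ)+1) *
        qPoch q (B*E*q/A) ((N : ℤ)+1) * qPoch q (D*E*q/A) ((N : ℤ)+1)))
  + B*D*E/C * (1 - q^((N : ℤ)-1)/A) *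
    ((qPoch q (A/(B*D)) ((N : ℤ)+2) * qPoch q (A/(B*E)) ((N : ℤ)+2) *
        qPoch q (A/(D*E)) ((N : ℤ)+2) * qPoch q (C/A) ((N : ℤ)+2)) /
     ((1 - C/A) * (1 - A*q/B) * (1 - A*q/D) * (1 - A*q/E) * (1 - B*D*E*q/A) *
      (qPoch q (1/B) ((N : ℤ)+1) * qPoch q (1/D) ((N : ℤ)+1) * qPoch q (1/E) ((N : ℤ)+1) *
        qPoch q (A^2/(B*C*D*E*q)) ((N : ℤ)+1))))
  - A^2*q/(B*D*E) *
    (((1 - B*q) * (1 - D*q) * (1 - E*q) * (1 - B*D*E*q^((N : ℤ)-1)/A^2)) *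
     (qPoch q (B*C*D*E*q^2/A^2) (N : ℤ) * qPoch q (B*q^2) (N : ℤ) *
        qPoch q (D*q^2) (N : ℤ) * qPoch q (E*q^2) (N : ℤ)) /
     ((1 - A*q/B) * (1 - A*q/D) * (1 - A*q/E) * (1 - B*D*E*q/A) *
      (qPoch q (A/C) (N : ℤ) * qPoch q (B*D*q/A) (N : ℤ) *
        qPoch q (B*E*q/A) (N : ℤ) * qPoch q (D*E*q/A) (N : ℤ))))


open Filter

lemma tendsto_F (q a : ℂ) (hq1 : ‖q‖ < 1) :
    ∃ L : ℂ, Tendsto (fun N : ℕ => ∏ j ∈ Finset.range N, (1 - a*q^j)) atTop (nhds L) ∧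
      ((∀ j : ℕ, 1 - a*q^j ≠ 0) → L ≠ 0) := by
  by_cases hall : ∀ j : ℕ, 1 - a*q^j ≠ 0
  · have hev : ∀ᶠ j : ℕ in atTop, ‖a‖ * ‖q‖^j ≤ 1/2 := by
      have h0 : Tendsto (fun j : ℕ => ‖a‖ * ‖q‖^j) atTop (nhds (‖a‖ * 0)) :=
        (tendsto_pow_atTop_nhds_zero_of_lt_one (norm_nonneg q) hq1).const_mul ‖a‖
      rw [mul_zero] at h0
      exact h0.eventually_le_const (by norm_num)
    have hsum : Summable (fun j : ℕ => Complex.log (1 - a*q^j)) := by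
      refine Summable.of_norm_bounded_eventually_nat (g := fun j => 3/2 * (‖a‖ * ‖q‖^j))
        (((summable_geometric_of_lt_one (norm_nonneg q) hq1).mul_left ‖a‖).mul_left (3/2)) ?_
      filter_upwards [hev] with j hj
      have hz : ‖-(a*q^j)‖ ≤ 1/2 := by
        rwa [norm_neg, norm_mul, norm_pow]
      calc ‖Complex.log (1 - a*q^j)‖ = ‖Complex.log (1 + -(a*q^j))‖ := by rw [sub_eq_add_neg]
        _ ≤ 3/2 * ‖-(a*q^j)‖ := Complex.norm_log_one_add_half_le_self hz
        _ = 3/2 * (‖a‖ * ‖q‖^j) := by rw [norm_neg, norm_mul, norm_pow]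
    have hps := hsum.hasSum.tendsto_sum_nat
    have heq : (fun N : ℕ => ∏ j ∈ Finset.range N, (1 - a*q^j)) =
        fun N : ℕ => Complex.exp (∑ j ∈ Finset.range N, Complex.log (1 - a*q^j)) := by
      funext N
      rw [Complex.exp_sum]
      exact Finset.prod_congr rfl fun j _ => (Complex.exp_log (hall j)).symm
    exact ⟨_, by rw [heq]; exact hps.cexp, fun _ => Complex.exp_ne_zero _⟩
  · push_neg at hall
    obtain ⟨j0, hj0⟩ := hall
    refine ⟨0, ?_, fun h => absurd (h j0) (by simpa using hj0)⟩
    apply Tendsto.congr' _ tendsto_const_nhds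
    filter_upwards [eventually_ge_atTop (j0+1)] with N hN
    exact (Finset.prod_eq_zero (Finset.mem_range.mpr hN) hj0).symm

lemma qPoch_ofNat (q a : ℂ) (m : ℕ) : qPoch q a (m : ℤ) = ∏ j ∈ Finset.range m, (1 - a*q^j) := by
  simp [qPoch]

lemma factor_ne (q x : ℂ) (h : ∀ n : ℤ, qPoch q x n ≠ 0) : ∀ j : ℕ, 1 - x*q^j ≠ 0 := by
  intro j hj
  apply h ((j+1 : ℕ) : ℤ)
  rw [qPoch_ofNat]
  exact Finset.prod_eq_zero (Finset.self_mem_range_succ j) hj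
/-- The boundary term `K_N(A;B,C,D,E)/(Cq³)^N` tends to `0` as `N → ∞`
when `|Cq³| > 1`. -/
theorem Kterm_tendsto_zero (q A B C D E : ℂ) (hq0 : 0 < ‖q‖) (hq1 : ‖q‖ < 1)
    (hA : A ≠ 0) (hB : B ≠ 0) (hC : C ≠ 0) (hD : D ≠ 0) (hE : E ≠ 0)
    (hCq : 1 < ‖C*q^3‖)
    (hgen : ∀ n : ℤ, qPoch q (A/C) n ≠ 0 ∧ qPoch q (B*D*q/A) n ≠ 0 ∧
      qPoch q (B*E*q/A) n ≠ 0 ∧ qPoch q (D*E*q/A) n ≠ 0 ∧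
      qPoch q (1/B) n ≠ 0 ∧ qPoch q (1/D) n ≠ 0 ∧ qPoch q (1/E) n ≠ 0 ∧
      qPoch q (A^2/(B*C*D*E*q)) n ≠ 0)
    (h1 : 1 - B*D*E*q/A ≠ 0) (h2 : 1 - C/A ≠ 0)
    (h3 : 1 - A*q/B ≠ 0) (h4 : 1 - A*q/D ≠ 0) (h5 : 1 - A*q/E ≠ 0) :
    Tendsto (fun N : ℕ => Kterm q A B C D E N / (C*q^3)^N) atTop (nhds 0) := by
  have hq : q ≠ 0 := by simpa using hq0.ne'
  -- limits of partial products
  obtain ⟨L1, hL1, -⟩ := tendsto_F q (B*q) hq1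
  obtain ⟨L2, hL2, -⟩ := tendsto_F q (D*q) hq1
  obtain ⟨L3, hL3, -⟩ := tendsto_F q (E*q) hq1
  obtain ⟨L4, hL4, -⟩ := tendsto_F q (B*C*D*E*q^2/A^2) hq1
  obtain ⟨L5, hL5, -⟩ := tendsto_F q (A/(B*D)) hq1
  obtain ⟨L6, hL6, -⟩ := tendsto_F q (A/(B*E)) hq1
  obtain ⟨L7, hL7, -⟩ := tendsto_F q (A/(D*E)) hq1
  obtain ⟨L8, hL8, -⟩ := tendsto_F q (C/A) hq1
  obtain ⟨L9, hL9, -⟩ := tendsto_F q (B*q^2) hq1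
  obtain ⟨L10, hL10, -⟩ := tendsto_F q (D*q^2) hq1
  obtain ⟨L11, hL11, -⟩ := tendsto_F q (E*q^2) hq1
  obtain ⟨M1, hM1, hM1ne'⟩ := tendsto_F q (A/C) hq1
  obtain ⟨M2, hM2, hM2ne'⟩ := tendsto_F q (B*D*q/A) hq1
  obtain ⟨M3, hM3, hM3ne'⟩ := tendsto_F q (B*E*q/A) hq1
  obtain ⟨M4, hM4, hM4ne'⟩ := tendsto_F q (D*E*q/A) hq1
  obtain ⟨M5, hM5, hM5ne'⟩ := tendsto_F q (1/B) hq1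
  obtain ⟨M6, hM6, hM6ne'⟩ := tendsto_F q (1/D) hq1
  obtain ⟨M7, hM7, hM7ne'⟩ := tendsto_F q (1/E) hq1
  obtain ⟨M8, hM8, hM8ne'⟩ := tendsto_F q (A^2/(B*C*D*E*q)) hq1
  have hM1ne := hM1ne' (factor_ne q _ fun n => (hgen n).1)
  have hM2ne := hM2ne' (factor_ne q _ fun n => (hgen n).2.1)
  have hM3ne := hM3ne' (factor_ne q _ fun n => (hgen n).2.2.1)
  have hM4ne := hM4ne' (factor_ne q _ fun n => (hgen n).2.2.2.1)
  have hM5ne := hM5ne' (factor_ne q _ fun n => (hgen n).2.2.2.2.1)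
  have hM6ne := hM6ne' (factor_ne q _ fun n => (hgen n).2.2.2.2.2.1)
  have hM7ne := hM7ne' (factor_ne q _ fun n => (hgen n).2.2.2.2.2.2.1)
  have hM8ne := hM8ne' (factor_ne q _ fun n => (hgen n).2.2.2.2.2.2.2)
  -- power limits
  have hpsub : ∀ m : ℤ, Tendsto (fun N : ℕ => q ^ ((N:ℤ) - m)) atTop (nhds 0) := by
    intro m
    have h : (fun N : ℕ => q ^ ((N:ℤ) - m)) = fun N : ℕ => q^N / q^m := by
      funext N; rw [zpow_sub₀ hq, zpow_natCast]
    rw [h]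
    simpa using (tendsto_pow_atTop_nhds_zero_of_norm_lt_one hq1).div_const (q^m)
  have hq23 : Tendsto (fun N : ℕ => q ^ (2*(N:ℤ)+3)) atTop (nhds 0) := by
    have h : (fun N : ℕ => q ^ (2*(N:ℤ)+3)) = fun N : ℕ => (q^(2:ℤ))^N * q^(3:ℤ) := by
      funext N; rw [zpow_add₀ hq, zpow_mul, zpow_natCast]
    rw [h]
    have h2 : ‖q^(2:ℤ)‖ < 1 := by
      rw [show (2:ℤ) = ((2:ℕ):ℤ) by norm_num, zpow_natCast, norm_pow]
      nlinarith
    simpa using (tendsto_pow_atTop_nhds_zero_of_norm_lt_one h2).mul_const (q^(3:ℤ))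
  -- rewrite qPoch at natural shifts
  have e0 : ∀ (a : ℂ) (N : ℕ), qPoch q a (N:ℤ) = ∏ j ∈ Finset.range N, (1 - a*q^j) :=
    fun a N => qPoch_ofNat q a N
  have e1 : ∀ (a : ℂ) (N : ℕ), qPoch q a ((N:ℤ)+1) = ∏ j ∈ Finset.range (N+1), (1 - a*q^j) := by
    intro a N
    rw [show ((N:ℤ)+1) = ((N+1 : ℕ) : ℤ) by push_cast; ring, qPoch_ofNat]
  have e2 : ∀ (a : ℂ) (N : ℕ), qPoch q a ((N:ℤ)+2) = ∏ j ∈ Finset.range (N+2), (1 - a*q^j) := by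
    intro a N
    rw [show ((N:ℤ)+2) = ((N+2 : ℕ) : ℤ) by push_cast; ring, qPoch_ofNat]
  have hKeq : (fun N : ℕ => Kterm q A B C D E N) = fun N : ℕ =>
        q^((N : ℤ) - 2)/C * ((1 - B*D*E*q^(2*(N : ℤ)+3)/A) / (1 - B*D*E*q/A)) *
          ((∏ j ∈ Finset.range (N+1), (1 - (B*q)*q^j)) * (∏ j ∈ Finset.range (N+1), (1 - (D*q)*q^j)) *
              (∏ j ∈ Finset.range (N+1), (1 - (E*q)*q^j)) *
              (∏ j ∈ Finset.range (N+1), (1 - (B*C*D*E*q^2/A^2)*q^j)) /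
           ((∏ j ∈ Finset.range (N+1), (1 - (A/C)*q^j)) * (∏ j ∈ Finset.range (N+1), (1 - (B*D*q/A)*q^j)) *
              (∏ j ∈ Finset.range (N+1), (1 - (B*E*q/A)*q^j)) * (∏ j ∈ Finset.range (N+1), (1 - (D*E*q/A)*q^j))))
        + B*D*E/C * (1 - q^((N : ℤ)-1)/A) *
          ((∏ j ∈ Finset.range (N+2), (1 - (A/(B*D))*q^j)) * (∏ j ∈ Finset.range (N+2), (1 - (A/(B*E))*q^j)) *
              (∏ j ∈ Finset.range (N+2), (1 - (A/(D*E))*q^j)) * (∏ j ∈ Finset.range (N+2), (1 - (C/A)*q^j)) /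
           ((1 - C/A) * (1 - A*q/B) * (1 - A*q/D) * (1 - A*q/E) * (1 - B*D*E*q/A) *
            ((∏ j ∈ Finset.range (N+1), (1 - (1/B)*q^j)) * (∏ j ∈ Finset.range (N+1), (1 - (1/D)*q^j)) *
              (∏ j ∈ Finset.range (N+1), (1 - (1/E)*q^j)) *
              (∏ j ∈ Finset.range (N+1), (1 - (A^2/(B*C*D*E*q))*q^j)))))
        - A^2*q/(B*D*E) *
          (((1 - B*q) * (1 - D*q) * (1 - E*q) * (1 - B*D*E*q^((N : ℤ)-1)/A^2)) *
           ((∏ j ∈ Finset.range N, (1 - (B*C*D*E*q^2/A^2)*q^j)) * (∏ j ∈ Finset.range N, (1 - (B*q^2)*q^j)) *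
              (∏ j ∈ Finset.range N, (1 - (D*q^2)*q^j)) * (∏ j ∈ Finset.range N, (1 - (E*q^2)*q^j))) /
           ((1 - A*q/B) * (1 - A*q/D) * (1 - A*q/E) * (1 - B*D*E*q/A) *
            ((∏ j ∈ Finset.range N, (1 - (A/C)*q^j)) * (∏ j ∈ Finset.range N, (1 - (B*D*q/A)*q^j)) *
              (∏ j ∈ Finset.range N, (1 - (B*E*q/A)*q^j)) * (∏ j ∈ Finset.range N, (1 - (D*E*q/A)*q^j))))) := by
    funext N
    simp only [Kterm, e0, e1, e2]
  have hone : Tendsto (fun _ : ℕ => (1:ℂ)) atTop (nhds 1) := tendsto_const_nhds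
  have sh1 := tendsto_add_atTop_nat 1
  have sh2 := tendsto_add_atTop_nat 2
  have hT1 := (((hpsub 2).div_const C).mul
        ((hone.sub ((hq23.const_mul (B*D*E)).div_const A)).div_const (1 - B*D*E*q/A))).mul
      (((((hL1.comp sh1).mul (hL2.comp sh1)).mul (hL3.comp sh1)).mul (hL4.comp sh1)).div
        ((((hM1.comp sh1).mul (hM2.comp sh1)).mul (hM3.comp sh1)).mul (hM4.comp sh1))
        (mul_ne_zero (mul_ne_zero (mul_ne_zero hM1ne hM2ne) hM3ne) hM4ne))
  have hT2 := ((hone.sub ((hpsub 1).div_const A)).const_mul (B*D*E/C)).mul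
      (((((hL5.comp sh2).mul (hL6.comp sh2)).mul (hL7.comp sh2)).mul (hL8.comp sh2)).div
        (((((hM5.comp sh1).mul (hM6.comp sh1)).mul (hM7.comp sh1)).mul (hM8.comp sh1)).const_mul
          ((1 - C/A) * (1 - A*q/B) * (1 - A*q/D) * (1 - A*q/E) * (1 - B*D*E*q/A)))
        (mul_ne_zero (mul_ne_zero (mul_ne_zero (mul_ne_zero (mul_ne_zero h2 h3) h4) h5) h1)
          (mul_ne_zero (mul_ne_zero (mul_ne_zero hM5ne hM6ne) hM7ne) hM8ne)))
  have hT3 := ((((hone.sub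
          (((hpsub 1).const_mul (B*D*E)).div_const (A^2))).const_mul
          ((1 - B*q) * (1 - D*q) * (1 - E*q))).mul
        (((hL4.mul hL9).mul hL10).mul hL11)).div
        ((((hM1.mul hM2).mul hM3).mul hM4).const_mul
          ((1 - A*q/B) * (1 - A*q/D) * (1 - A*q/E) * (1 - B*D*E*q/A)))
        (mul_ne_zero (mul_ne_zero (mul_ne_zero (mul_ne_zero h3 h4) h5) h1)
          (mul_ne_zero (mul_ne_zero (mul_ne_zero hM1ne hM2ne) hM3ne) hM4ne))).const_mul
        (A^2*q/(B*D*E))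
  have hKbig := (hT1.add hT2).sub hT3
  have hKS := Filter.Tendsto.congr (fun N => (congrFun hKeq N).symm) hKbig
  have hpow : Tendsto (fun N : ℕ => ((C*q^3)⁻¹)^N) atTop (nhds 0) := by
    apply tendsto_pow_atTop_nhds_zero_of_norm_lt_one
    rw [norm_inv]
    exact inv_lt_one_of_one_lt₀ hCq
  have hfin := hKS.mul hpow
  rw [mul_zero] at hfin
  refine hfin.congr fun N => ?_
  rw [inv_pow, ← div_eq_mul_inv]
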